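/- Let 1 ≤ p < ∞ and ω ∈ A_p(φ). Then there is a constant C > 0 such that for every cube Q ⊂ ℝⁿ and every locally integrable f, (1/(φ(|Q|)|Q|)) ∫_Q |f(y)| dy ≤ C ((1/ω(5Q)) ∫_Q |f(y)|^p ω(y) dy)^{1/p}. In particular, for every measurable set E ⊂ Q, |E|/(φ(|Q|)|Q|) ≤ C (ω(E)/ω(5Q))^{1/p}. -/

import Mathlib

open MeasureTheory Real Filter
open scoped ENNReal NNReal BigOperators FourierTransform RealInnerProductSpace

noncomputable section

/-- Euclidean space `ℝⁿ`. -/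
abbrev En (n : ℕ) : Type := EuclideanSpace ℝ (Fin n)

namespace Paper

variable {n : ℕ}

/-- The (closed) cube centered at `c` with sidelength `r`, sides parallel to the axes. -/
def cube (c : En n) (r : ℝ) : Set (En n) := {x | ∀ i, |x i - c i| ≤ r / 2}

/-- Lebesgue measure of a cube, as a real number. -/
def cubeVol (c : En n) (r : ℝ) : ℝ := (volume (cube c r)).toReal

/-- `φ(t) = (1+t)^{α₀}`. -/
def phi (α₀ t : ℝ) : ℝ := (1 + t) ^ α₀

/-- A weight: a positive, locally integrable function. -/
def IsWeight (w : En n → ℝ) : Prop := (∀ x, 0 < w x) ∧ LocallyIntegrable w volume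

/-- The measure `ω(E) = ∫_E ω dx`. -/
def wMeas (w : En n → ℝ) : Measure (En n) :=
  volume.withDensity (fun x => ENNReal.ofReal (w x))

/-- The maximal operator `M_{φ,η}` applied to an `ℝ≥0∞`-valued function:
`sup_{Q ∋ x} (1/(φ(|Q|)^η |Q|)) ∫_Q g`. -/
def MphiG (α₀ η : ℝ) (g : En n → ℝ≥0∞) (x : En n) : ℝ≥0∞ :=
  ⨆ (c : En n) (r : ℝ) (_ : 0 < r) (_ : x ∈ cube c r),
    (∫⁻ y in cube c r, g y) /
      (ENNReal.ofReal ((phi α₀ (cubeVol c r)) ^ η) * volume (cube c r))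

/-- `M_{φ,η} f(x) = sup_{Q ∋ x} (1/(φ(|Q|)^η |Q|)) ∫_Q |f|` for real-valued `f`. -/
def MphiEta (α₀ η : ℝ) (f : En n → ℝ) : En n → ℝ≥0∞ :=
  MphiG α₀ η (fun y => ENNReal.ofReal |f y|)

/-- `M_{φ,η} f` for complex-valued `f`. -/
def MphiEtaC (α₀ η : ℝ) (f : En n → ℂ) : En n → ℝ≥0∞ :=
  MphiG α₀ η (fun y => ENNReal.ofReal ‖f y‖)

/-- `ω ∈ A₁(φ)`: `M_φ ω ≤ C ω` a.e. -/
def MemA1Phi (α₀ : ℝ) (w : En n → ℝ) : Prop :=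
  ∃ C > 0, ∀ᵐ x ∂(volume : Measure (En n)),
    MphiEta α₀ 1 w x ≤ ENNReal.ofReal (C * w x)

/-- `ω ∈ A_p(φ)` for `1 < p`: the Muckenhoupt-type condition
`(1/(φ(|Q|)|Q|) ∫_Q ω) (1/(φ(|Q|)|Q|) ∫_Q ω^{-1/(p-1)})^{p-1} ≤ C` for all cubes `Q`. -/
def MemApPhiGT (α₀ p : ℝ) (w : En n → ℝ) : Prop :=
  ∃ C > 0, ∀ (c : En n) (r : ℝ), 0 < r →
    ((∫⁻ y in cube c r, ENNReal.ofReal (w y)) /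
        (ENNReal.ofReal (phi α₀ (cubeVol c r)) * volume (cube c r))) *
      ((∫⁻ y in cube c r, ENNReal.ofReal (w y ^ (-(1 / (p - 1))))) /
        (ENNReal.ofReal (phi α₀ (cubeVol c r)) * volume (cube c r))) ^ (p - 1) ≤
      ENNReal.ofReal C

/-- `ω ∈ A_p(φ)` for `1 ≤ p`. -/
def MemApPhi (α₀ p : ℝ) (w : En n → ℝ) : Prop :=
  if p = 1 then MemA1Phi α₀ w else MemApPhiGT α₀ p w

/-- `A_∞(φ) = ⋃_{p ≥ 1} A_p(φ)`. -/
def MemAInfPhi (α₀ : ℝ) (w : En n → ℝ) : Prop := ∃ p, 1 ≤ p ∧ MemApPhi α₀ p w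

/-- `(∫ g^p dω)^{1/p}` for an `ℝ≥0∞`-valued `g`. -/
def wLpNormG (p : ℝ) (w : En n → ℝ) (g : En n → ℝ≥0∞) : ℝ≥0∞ :=
  (∫⁻ x, (g x) ^ p ∂(wMeas w)) ^ (1 / p)

/-- The weighted norm `‖f‖_{L^p(ω)} = (∫ |f|^p ω dx)^{1/p}` for complex-valued `f`. -/
def wLpNormC (p : ℝ) (w : En n → ℝ) (f : En n → ℂ) : ℝ≥0∞ :=
  wLpNormG p w (fun x => ENNReal.ofReal ‖f x‖)

/-- The pseudo-differential operator with symbol `σ`: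
`Tf(x) = ∫ σ(x,ξ) e^{2πi x·ξ} 𝓕f(ξ) dξ`. -/
def pdo (σ : En n → En n → ℂ) (f : En n → ℂ) (x : En n) : ℂ :=
  ∫ ξ : En n, σ x ξ *
    Complex.exp (2 * (Real.pi : ℂ) * Complex.I * ((inner ℝ x ξ : ℝ) : ℂ)) * (𝓕 f) ξ

/-- The list of coordinate directions associated with a multi-index `α`,
with `i` repeated `α i` times. -/
def mIdxDirs (α : Fin n → ℕ) : List (En n) :=
  ((List.finRange n).map fun i => List.replicate (α i) (EuclideanSpace.single i (1 : ℝ))).flatten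

/-- Iterated directional derivative along a list of directions. -/
def dirDeriv (L : List (En n)) (f : En n → ℂ) : En n → ℂ :=
  L.foldr (fun v g => fun x => fderiv ℝ g x v) f

/-- `D_x^α D_ξ^β σ (x, ξ)`. -/
def symbolDeriv (σ : En n → En n → ℂ) (α β : Fin n → ℕ) (x ξ : En n) : ℂ :=
  dirDeriv (mIdxDirs β) (fun ξ' => dirDeriv (mIdxDirs α) (fun x' => σ x' ξ') x) ξ

/-- `σ ∈ S^m_{1,0}`: smooth with `|D_x^α D_ξ^β σ(x,ξ)| ≤ C_{α,β} (1+|ξ|)^{m-|β|}`. -/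
def IsSymbol (m : ℝ) (σ : En n → En n → ℂ) : Prop :=
  ContDiff ℝ (⊤ : ℕ∞) (fun q : En n × En n => σ q.1 q.2) ∧
  ∀ α β : Fin n → ℕ, ∃ C > 0, ∀ x ξ : En n,
    ‖symbolDeriv σ α β x ξ‖ ≤ C * (1 + ‖ξ‖) ^ (m - (∑ i, (β i : ℝ)))

/-- `σ ∈ S^{-∞}_{1,0}`: the symbol estimates hold for every order `m`. -/
def IsSymbolSmoothing (σ : En n → En n → ℂ) : Prop :=
  ContDiff ℝ (⊤ : ℕ∞) (fun q : En n × En n => σ q.1 q.2) ∧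
  ∀ (m : ℝ) (α β : Fin n → ℕ), ∃ C > 0, ∀ x ξ : En n,
    ‖symbolDeriv σ α β x ξ‖ ≤ C * (1 + ‖ξ‖) ^ (m - (∑ i, (β i : ℝ)))

/-- Average of a real function over a set. -/
def setAvg (S : Set (En n)) (f : En n → ℝ) : ℝ := (volume S).toReal⁻¹ * ∫ y in S, f y

/-- Average of a complex function over a set. -/
def setAvgC (S : Set (En n)) (f : En n → ℂ) : ℂ := ((volume S).toReal⁻¹ : ℝ) • ∫ y in S, f y

/-- Average `b_Q` of `b` over the cube `Q(c,r)`. -/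
def cubeAvg (c : En n) (r : ℝ) (b : En n → ℝ) : ℝ := setAvg (cube c r) b

/-- The set of mean oscillations `(1/|Q|)∫_Q |b - b_Q|` over all cubes. -/
def bmoSet (b : En n → ℝ) : Set ℝ :=
  {v | ∃ (c : En n) (r : ℝ), 0 < r ∧
    v = (cubeVol c r)⁻¹ * ∫ y in cube c r, |b y - cubeAvg c r b|}

/-- `‖b‖_{BMO}`. -/
def bmoNorm (b : En n → ℝ) : ℝ := sSup (bmoSet b)

/-- `b ∈ BMO(ℝⁿ)`. -/
def MemBMO (b : En n → ℝ) : Prop :=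
  LocallyIntegrable b volume ∧ BddAbove (bmoSet b)

/-- The commutator `[b,T]f = b · Tf − T(bf)`. -/
def commutator (b : En n → ℝ) (σ : En n → En n → ℂ) (f : En n → ℂ) (x : En n) : ℂ :=
  (b x : ℂ) * pdo σ f x - pdo σ (fun y => (b y : ℂ) * f y) x

/-- The sharp maximal operator `M^♯_{φ,η}` for real-valued `f`. -/
def MsharpEta (α₀ η : ℝ) (f : En n → ℝ) (x : En n) : ℝ≥0∞ :=
  (⨆ (c : En n) (r : ℝ) (_ : 0 < r) (_ : r < 1) (_ : x ∈ cube c r),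
      (∫⁻ y in cube c r, ENNReal.ofReal |f y - setAvg (cube c r) f|) / volume (cube c r)) +
  (⨆ (c : En n) (r : ℝ) (_ : 1 ≤ r) (_ : x ∈ cube c r),
      (∫⁻ y in cube c r, ENNReal.ofReal |f y|) /
        (ENNReal.ofReal ((phi α₀ (cubeVol c r)) ^ η) * volume (cube c r)))

/-- The sharp maximal operator `M^♯_{φ,η}` for complex-valued `f`. -/
def MsharpEtaC (α₀ η : ℝ) (f : En n → ℂ) (x : En n) : ℝ≥0∞ :=
  (⨆ (c : En n) (r : ℝ) (_ : 0 < r) (_ : r < 1) (_ : x ∈ cube c r),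
      (∫⁻ y in cube c r, ENNReal.ofReal ‖f y - setAvgC (cube c r) f‖) / volume (cube c r)) +
  (⨆ (c : En n) (r : ℝ) (_ : 1 ≤ r) (_ : x ∈ cube c r),
      (∫⁻ y in cube c r, ENNReal.ofReal ‖f y‖) /
        (ENNReal.ofReal ((phi α₀ (cubeVol c r)) ^ η) * volume (cube c r)))

/-- `M^♯_{δ,φ,η} f = (M^♯_{φ,η}(|f|^δ))^{1/δ}` for complex-valued `f`. -/
def MsharpDeltaEta (α₀ δ η : ℝ) (f : En n → ℂ) (x : En n) : ℝ≥0∞ :=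
  (MsharpEta α₀ η (fun y => ‖f y‖ ^ δ) x) ^ (1 / δ)

/-- The dyadic cube `2^{-k}(m + [0,1)ⁿ)`. -/
def dyadicCube (k : ℤ) (m : Fin n → ℤ) : Set (En n) :=
  {x | ∀ i, (m i : ℝ) * (2 : ℝ) ^ (-k) ≤ x i ∧ x i < ((m i : ℝ) + 1) * (2 : ℝ) ^ (-k)}

/-- The dyadic maximal operator `M^△_{φ,η}`. -/
def MdyadicEta (α₀ η : ℝ) (f : En n → ℝ) (x : En n) : ℝ≥0∞ :=
  ⨆ (k : ℤ) (m : Fin n → ℤ) (_ : x ∈ dyadicCube k m),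
    (∫⁻ y in dyadicCube k m, ENNReal.ofReal |f y|) /
      (ENNReal.ofReal ((phi α₀ ((volume (dyadicCube k m)).toReal)) ^ η) *
        volume (dyadicCube k m))

/-- The dyadic sharp maximal operator `M^{♯,△}_{φ,η}`. -/
def MsharpDyadicEta (α₀ η : ℝ) (f : En n → ℝ) (x : En n) : ℝ≥0∞ :=
  (⨆ (k : ℤ) (m : Fin n → ℤ) (_ : x ∈ dyadicCube k m) (_ : (2 : ℝ) ^ (-k) < 1),
      (∫⁻ y in dyadicCube k m, ENNReal.ofReal |f y - setAvg (dyadicCube k m) f|) /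
        volume (dyadicCube k m)) +
  (⨆ (k : ℤ) (m : Fin n → ℤ) (_ : x ∈ dyadicCube k m) (_ : 1 ≤ (2 : ℝ) ^ (-k)),
      (∫⁻ y in dyadicCube k m, ENNReal.ofReal |f y|) /
        (ENNReal.ofReal ((phi α₀ ((volume (dyadicCube k m)).toReal)) ^ η) *
          volume (dyadicCube k m)))

/-- The weighted maximal operator `M_ω f(x) = sup_{Q ∋ x} (1/ω(5Q)) ∫_Q |f| ω`. -/
def Mw (w : En n → ℝ) (f : En n → ℝ) (x : En n) : ℝ≥0∞ :=
  ⨆ (c : En n) (r : ℝ) (_ : 0 < r) (_ : x ∈ cube c r),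
    (∫⁻ y in cube c r, ENNReal.ofReal |f y| * ENNReal.ofReal (w y)) /
      wMeas w (cube c (5 * r))

/-- The Young function `B(t) = Φ(t) = t(1 + log⁺ t)`. -/
def Bfun (t : ℝ) : ℝ := t * (1 + max (Real.log t) 0)

/-- The Luxemburg norm `‖f‖_{B,Q} = inf {λ > 0 : (1/|Q|)∫_Q B(|f|/λ) ≤ 1}` (real `f`). -/
def luxNorm (S : Set (En n)) (f : En n → ℝ) : ℝ≥0∞ :=
  sInf (ENNReal.ofReal '' {lam : ℝ | 0 < lam ∧
    (∫⁻ y in S, ENNReal.ofReal (Bfun (|f y| / lam))) / volume S ≤ 1})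

/-- The Luxemburg norm for complex `f`. -/
def luxNormC (S : Set (En n)) (f : En n → ℂ) : ℝ≥0∞ :=
  sInf (ENNReal.ofReal '' {lam : ℝ | 0 < lam ∧
    (∫⁻ y in S, ENNReal.ofReal (Bfun (‖f y‖ / lam))) / volume S ≤ 1})

/-- `M_{L log L, φ, η} f(x) = sup_{Q ∋ x} φ(|Q|)^{−η} ‖f‖_{L log L, Q}` (real `f`). -/
def MLlogL (α₀ η : ℝ) (f : En n → ℝ) (x : En n) : ℝ≥0∞ :=
  ⨆ (c : En n) (r : ℝ) (_ : 0 < r) (_ : x ∈ cube c r),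
    ENNReal.ofReal ((phi α₀ (cubeVol c r)) ^ (-η)) * luxNorm (cube c r) f

/-- `M_{L log L, φ, η} f` for complex `f`. -/
def MLlogLC (α₀ η : ℝ) (f : En n → ℂ) (x : En n) : ℝ≥0∞ :=
  ⨆ (c : En n) (r : ℝ) (_ : 0 < r) (_ : x ∈ cube c r),
    ENNReal.ofReal ((phi α₀ (cubeVol c r)) ^ (-η)) * luxNormC (cube c r) f

end Paper

open Paper MeasureTheory Real
open scoped ENNReal

/-!
On a cube `Q'` the `A_p(φ)` condition gives
`ω(Q')^{1/p} (∫_{Q'} ω^{-1/(p-1)})^{(p-1)/p} ≲ φ(|Q'|)|Q'|`, so Hölder's inequality on any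
`S ⊆ Q'`, with `|f| = (|f| ω^{1/p}) ω^{-1/p}`, bounds `∫_S |f|` by `(∫_S |f|^p ω)^{1/p}` times
`φ(|Q'|)|Q'| / ω(Q')^{1/p}`; for `p = 1` the pointwise bound `ω(Q') / (φ(|Q'|)|Q'|) ≤ M_φ ω ≤ C ω`
a.e. on `Q'` does the same. Taking `Q' = 5Q` costs only the factor `5^{nα₀} 5^n`, since
`φ(|5Q|)|5Q| ≤ 5^{nα₀} 5^n φ(|Q|)|Q|`. The estimate for sets is the case `S = E`, `f = 1`.
-/

namespace ENNReal

lemma rpow_one_div_mul_rpow_le {W N D C : ℝ≥0∞} {p : ℝ} (hp : 1 < p) (hD0 : D ≠ 0) (hDt : D ≠ ∞)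
    (h : W / D * (N / D) ^ (p - 1) ≤ C) :
    W ^ (1 / p) * N ^ ((p - 1) / p) ≤ C ^ (1 / p) * D := by
  have hp0 : 0 < p := by linarith
  have hDp : D * D ^ (p - 1) = D ^ p := by
    nth_rewrite 1 [← rpow_one D]
    rw [← rpow_add _ _ hD0 hDt, add_sub_cancel]
  have hprod : W * N ^ (p - 1) ≤ C * D ^ p := by
    rwa [div_rpow_of_nonneg _ _ (by linarith), div_eq_mul_inv, div_eq_mul_inv, mul_mul_mul_comm,
      ← ENNReal.mul_inv (Or.inl hD0) (Or.inl hDt), hDp, ← div_eq_mul_inv,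
      ENNReal.div_le_iff (rpow_pos_of_nonneg (pos_iff_ne_zero.2 hD0) hp0.le).ne'
        (rpow_ne_top_of_nonneg hp0.le hDt)] at h
  calc W ^ (1 / p) * N ^ ((p - 1) / p) = (W * N ^ (p - 1)) ^ (1 / p) := by
        rw [mul_rpow_of_nonneg _ _ (by positivity), ← rpow_mul, mul_one_div]
    _ ≤ (C * D ^ p) ^ (1 / p) := by gcongr
    _ = C ^ (1 / p) * D := by
        rw [mul_rpow_of_nonneg _ _ (by positivity), ← rpow_mul, mul_one_div_cancel hp0.ne',
          rpow_one]

lemma div_le_mul_div_rpow {a b c D W : ℝ≥0∞} {t : ℝ} (ht : 0 ≤ t) (hD0 : D ≠ 0) (hDt : D ≠ ∞)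
    (hW0 : W ≠ 0) (hWt : W ≠ ∞) (h : a * W ^ t ≤ c * b ^ t * D) :
    a / D ≤ c * (b / W) ^ t := by
  have hWt0 : W ^ t ≠ 0 := (rpow_pos (pos_iff_ne_zero.2 hW0) hWt).ne'
  have hWtt : W ^ t ≠ ∞ := rpow_ne_top_of_nonneg ht hWt
  have hdiv : c * (b ^ t / W ^ t) * D = c * b ^ t * D / W ^ t := by
    simp only [div_eq_mul_inv]; ring
  rwa [ENNReal.div_le_iff hD0 hDt, div_rpow_of_nonneg _ _ ht, hdiv,
    ENNReal.le_div_iff_mul_le (Or.inl hWt0) (Or.inl hWtt)]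

end ENNReal

lemma MeasureTheory.lintegral_le_weighted_holder {α : Type*} [MeasurableSpace α] (μ : Measure α)
    {p : ℝ} (hp : 1 < p) {w : α → ℝ} (hw_pos : ∀ x, 0 < w x) (hw : AEMeasurable w μ)
    {g : α → ℝ≥0∞} (hg : AEMeasurable g μ) :
    ∫⁻ x, g x ∂μ ≤ (∫⁻ x, ENNReal.ofReal (w x) * g x ^ p ∂μ) ^ (1 / p) *
      (∫⁻ x, ENNReal.ofReal (w x ^ (-(1 / (p - 1)))) ∂μ) ^ ((p - 1) / p) := by
  have hp0 : p ≠ 0 := by linarith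
  have hW : AEMeasurable (fun x => ENNReal.ofReal (w x)) μ := hw.ennreal_ofReal
  have hsplit : ∀ x, g x = (g x * ENNReal.ofReal (w x) ^ (1 / p)) *
      ENNReal.ofReal (w x) ^ (-(1 / p)) := fun x => by
    rw [ENNReal.rpow_neg, mul_assoc, ENNReal.mul_inv_cancel
      (ENNReal.rpow_pos (ENNReal.ofReal_pos.2 (hw_pos x)) ENNReal.ofReal_ne_top).ne'
      (ENNReal.rpow_ne_top_of_nonneg (by positivity) ENNReal.ofReal_ne_top), mul_one]
  have hfirst : ∀ x, (g x * ENNReal.ofReal (w x) ^ (1 / p)) ^ p =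
      ENNReal.ofReal (w x) * g x ^ p := fun x => by
    rw [ENNReal.mul_rpow_of_nonneg _ _ (by linarith), ← ENNReal.rpow_mul, one_div_mul_cancel hp0,
      ENNReal.rpow_one, mul_comm]
  have hsecond : ∀ x, (ENNReal.ofReal (w x) ^ (-(1 / p))) ^ (p / (p - 1)) =
      ENNReal.ofReal (w x ^ (-(1 / (p - 1)))) := fun x => by
    rw [← ENNReal.rpow_mul, ENNReal.ofReal_rpow_of_pos (hw_pos x)]
    congr 2
    field_simp
  simpa only [Pi.mul_apply, ← hsplit, hfirst, Real.conjExponent, hsecond, one_div_div] using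
    ENNReal.lintegral_mul_le_Lp_mul_Lq μ (Real.HolderConjugate.conjExponent hp)
      (f := fun x => g x * ENNReal.ofReal (w x) ^ (1 / p))
      (g := fun x => ENNReal.ofReal (w x) ^ (-(1 / p))) (hg.mul (hW.pow_const _)) (hW.pow_const _)

namespace Paper

variable {n : ℕ}

lemma cube_eq_preimage_pi (c : En n) (r : ℝ) :
    cube c r = (MeasurableEquiv.toLp 2 (Fin n → ℝ)).symm ⁻¹'
      (Set.univ.pi fun i => Set.Icc (c i - r / 2) (c i + r / 2)) := by
  ext x
  simp only [cube, Set.mem_ofPred_eq, Set.mem_preimage, Set.mem_univ_pi, Set.mem_Icc,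
    abs_sub_le_iff]
  refine forall_congr' fun i => ?_
  show _ ↔ c i - r / 2 ≤ x i ∧ x i ≤ c i + r / 2
  constructor <;> rintro ⟨h1, h2⟩ <;> constructor <;> linarith

lemma measurableSet_cube (c : En n) (r : ℝ) : MeasurableSet (cube c r) := by
  rw [cube_eq_preimage_pi]
  exact (MeasurableEquiv.toLp 2 (Fin n → ℝ)).symm.measurable
    (MeasurableSet.univ_pi fun _ => measurableSet_Icc)

lemma isCompact_cube (c : En n) (r : ℝ) : IsCompact (cube c r) := by
  rw [cube_eq_preimage_pi]
  exact (PiLp.homeomorph 2 fun _ : Fin n => ℝ).isCompact_preimage.2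
    (isCompact_univ_pi fun _ => isCompact_Icc)

lemma volume_cube (c : En n) (r : ℝ) : volume (cube c r) = ENNReal.ofReal r ^ n := by
  rw [cube_eq_preimage_pi,
    (EuclideanSpace.volume_preserving_symm_measurableEquiv_toLp (Fin n)).measure_preimage
      (MeasurableSet.univ_pi fun _ => measurableSet_Icc).nullMeasurableSet, volume_pi_pi]
  simp [Real.volume_Icc]

lemma cubeVol_eq (c : En n) {r : ℝ} (hr : 0 ≤ r) : cubeVol c r = r ^ n := by
  rw [cubeVol, volume_cube c r, ENNReal.toReal_pow, ENNReal.toReal_ofReal hr]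

lemma cube_subset_cube (c : En n) {r s : ℝ} (hrs : r ≤ s) : cube c r ⊆ cube c s :=
  fun _ hx i => (hx i).trans (by linarith)

lemma volume_cube_ne_zero (c : En n) {r : ℝ} (hr : 0 < r) : volume (cube c r) ≠ 0 := by
  simp [volume_cube c r, hr]

/-- The normalising factor `φ(|Q|)|Q|` of the cube `Q = cube c r`. -/
def phiVol (α₀ : ℝ) (c : En n) (r : ℝ) : ℝ≥0∞ :=
  ENNReal.ofReal (phi α₀ (cubeVol c r)) * volume (cube c r)

lemma phiVol_ne_zero (α₀ : ℝ) (c : En n) {r : ℝ} (hr : 0 < r) : phiVol α₀ c r ≠ 0 :=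
  mul_ne_zero (ENNReal.ofReal_pos.2 (Real.rpow_pos_of_pos
    (add_pos_of_pos_of_nonneg one_pos ENNReal.toReal_nonneg) _)).ne' (volume_cube_ne_zero c hr)

lemma phiVol_ne_top (α₀ : ℝ) (c : En n) (r : ℝ) : phiVol α₀ c r ≠ ∞ :=
  ENNReal.mul_ne_top ENNReal.ofReal_ne_top
    (by rw [volume_cube c r]; exact ENNReal.pow_ne_top ENNReal.ofReal_ne_top)

lemma phiVol_mul_le {α₀ : ℝ} (hα₀ : 0 ≤ α₀) (c : En n) {r s : ℝ} (hr : 0 ≤ r) (hs : 1 ≤ s) :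
    phiVol α₀ c (s * r) ≤ ENNReal.ofReal ((s ^ n) ^ α₀ * s ^ n) * phiVol α₀ c r := by
  have hsn : 1 ≤ s ^ n := one_le_pow₀ hs
  have hphi : phi α₀ (cubeVol c (s * r)) ≤ (s ^ n) ^ α₀ * phi α₀ (cubeVol c r) := by
    rw [cubeVol_eq c hr, cubeVol_eq c (by positivity), phi, phi, mul_pow,
      ← Real.mul_rpow (by positivity) (by positivity)]
    gcongr
    nlinarith [pow_nonneg hr n]
  have hvol : volume (cube c (s * r)) = ENNReal.ofReal (s ^ n) * volume (cube c r) := by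
    rw [volume_cube c (s * r), volume_cube c r, ENNReal.ofReal_mul (by linarith), mul_pow,
      ENNReal.ofReal_pow (by linarith)]
  calc phiVol α₀ c (s * r)
      = ENNReal.ofReal (phi α₀ (cubeVol c (s * r))) *
          (ENNReal.ofReal (s ^ n) * volume (cube c r)) := by rw [phiVol, hvol]
    _ ≤ ENNReal.ofReal ((s ^ n) ^ α₀ * phi α₀ (cubeVol c r)) *
          (ENNReal.ofReal (s ^ n) * volume (cube c r)) := by gcongr
    _ = _ := by
        rw [phiVol, ENNReal.ofReal_mul (by positivity), ENNReal.ofReal_mul (by positivity)]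
        ring

lemma div_phiVol_le_mul_div_phiVol {α₀ : ℝ} (hα₀ : 0 ≤ α₀) (c : En n) {r s : ℝ} (hr : 0 < r)
    (hs : 1 ≤ s) (a : ℝ≥0∞) :
    a / phiVol α₀ c r ≤ ENNReal.ofReal ((s ^ n) ^ α₀ * s ^ n) * (a / phiVol α₀ c (s * r)) := by
  set K := ENNReal.ofReal ((s ^ n) ^ α₀ * s ^ n)
  have hK0 : K ≠ 0 := (ENNReal.ofReal_pos.2 (by positivity)).ne'
  calc a / phiVol α₀ c r = K * (a / (K * phiVol α₀ c r)) := by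
        rw [← mul_div_assoc, ENNReal.mul_div_mul_left _ _ hK0 ENNReal.ofReal_ne_top]
    _ ≤ K * (a / phiVol α₀ c (s * r)) := by
        gcongr
        exact phiVol_mul_le hα₀ c hr.le hs

section Weight

variable {w : En n → ℝ}

lemma IsWeight.setLIntegral_wMeas (hw : IsWeight w) (S : Set (En n)) (g : En n → ℝ≥0∞) :
    ∫⁻ y in S, g y ∂wMeas w = ∫⁻ y in S, ENNReal.ofReal (w y) * g y :=
  setLIntegral_withDensity_eq_setLIntegral_mul_non_measurable₀' _ S
    hw.2.aestronglyMeasurable.aemeasurable.ennreal_ofReal.restrict g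
    (ae_of_all _ fun _ => ENNReal.ofReal_lt_top)

lemma IsWeight.wMeas_ne_zero (hw : IsWeight w) {S : Set (En n)} (hS : volume S ≠ 0) :
    wMeas w S ≠ 0 := by
  rw [wMeas, Ne, withDensity_apply_eq_zero' hw.2.aestronglyMeasurable.aemeasurable.ennreal_ofReal]
  simpa [hw.1] using hS

lemma IsWeight.wMeas_ne_top (hw : IsWeight w) {K : Set (En n)} (hK : IsCompact K) :
    wMeas w K ≠ ∞ := by
  rw [wMeas, withDensity_apply']
  exact (hw.2.integrableOn_isCompact hK).lintegral_lt_top.ne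

lemma lintegral_div_phiVol_le_MphiEta (α₀ : ℝ) (f : En n → ℝ) {c x : En n} {r : ℝ} (hr : 0 < r)
    (hx : x ∈ cube c r) :
    (∫⁻ y in cube c r, ENNReal.ofReal |f y|) / phiVol α₀ c r ≤ MphiEta α₀ 1 f x := by
  unfold MphiEta MphiG
  refine le_iSup_of_le c (le_iSup_of_le r (le_iSup_of_le hr (le_iSup_of_le hx ?_)))
  rw [Real.rpow_one]
  rfl

variable {α₀ : ℝ}

lemma MemA1Phi.exists_lintegral_mul_wMeas_le (hw : IsWeight w) (hA : MemA1Phi α₀ w) :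
    ∃ C > 0, ∀ (c : En n) (r : ℝ), 0 < r → ∀ S ⊆ cube c r, ∀ g : En n → ℝ≥0∞,
      (∫⁻ y in S, g y) * wMeas w (cube c r) ≤
        ENNReal.ofReal C * (∫⁻ y in S, g y ∂wMeas w) * phiVol α₀ c r := by
  obtain ⟨C, hC, hM⟩ := hA
  refine ⟨C, hC, fun c r hr S hS g => ?_⟩
  set W := wMeas w (cube c r)
  set D := phiVol α₀ c r
  have hW : W = ∫⁻ y in cube c r, ENNReal.ofReal |w y| := by
    simp only [W, wMeas, withDensity_apply _ (measurableSet_cube c r), abs_of_pos (hw.1 _)]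
  have hpt : ∀ᵐ y ∂volume.restrict S, W ≤ ENNReal.ofReal (C * w y) * D := by
    refine ae_restrict_of_ae_restrict_of_subset hS ?_
    filter_upwards [ae_restrict_of_ae hM, ae_restrict_mem (measurableSet_cube c r)] with y hy hyQ
    rw [← ENNReal.div_le_iff (phiVol_ne_zero α₀ c hr) (phiVol_ne_top α₀ c r), hW]
    exact (lintegral_div_phiVol_le_MphiEta α₀ w hr hyQ).trans hy
  calc (∫⁻ y in S, g y) * W = ∫⁻ y in S, g y * W :=
        (lintegral_mul_const' _ _ (hw.wMeas_ne_top (isCompact_cube c r))).symm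
    _ ≤ ∫⁻ y in S, ENNReal.ofReal C * (ENNReal.ofReal (w y) * g y) * D :=
        lintegral_mono_ae <| hpt.mono fun y hy => by
          rw [ENNReal.ofReal_mul hC.le] at hy
          calc g y * W ≤ g y * (ENNReal.ofReal C * ENNReal.ofReal (w y) * D) := by gcongr
            _ = _ := by ring
    _ = ENNReal.ofReal C * (∫⁻ y in S, g y ∂wMeas w) * D := by
        rw [lintegral_mul_const' _ _ (phiVol_ne_top α₀ c r),
          lintegral_const_mul' _ _ ENNReal.ofReal_ne_top, hw.setLIntegral_wMeas]

lemma MemApPhiGT.exists_lintegral_mul_wMeas_rpow_le {p : ℝ} (hp : 1 < p) (hw : IsWeight w)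
    (hA : MemApPhiGT α₀ p w) :
    ∃ C > 0, ∀ (c : En n) (r : ℝ), 0 < r → ∀ S ⊆ cube c r, ∀ g : En n → ℝ≥0∞,
      AEMeasurable g (volume.restrict S) →
      (∫⁻ y in S, g y) * wMeas w (cube c r) ^ (1 / p) ≤
        ENNReal.ofReal C * (∫⁻ y in S, g y ^ p ∂wMeas w) ^ (1 / p) * phiVol α₀ c r := by
  obtain ⟨C, hC, hAp⟩ := hA
  refine ⟨C ^ (1 / p), by positivity, fun c r hr S hS g hg => ?_⟩
  set N := fun T : Set (En n) => ∫⁻ y in T, ENNReal.ofReal (w y ^ (-(1 / (p - 1))))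
  have hcube : wMeas w (cube c r) ^ (1 / p) * N (cube c r) ^ ((p - 1) / p) ≤
      ENNReal.ofReal (C ^ (1 / p)) * phiVol α₀ c r := by
    rw [← ENNReal.ofReal_rpow_of_pos hC]
    refine ENNReal.rpow_one_div_mul_rpow_le hp (phiVol_ne_zero α₀ c hr) (phiVol_ne_top α₀ c r) ?_
    rw [wMeas, withDensity_apply _ (measurableSet_cube c r)]
    exact hAp c r hr
  have hN : N S ≤ N (cube c r) := lintegral_mono_set hS
  calc (∫⁻ y in S, g y) * wMeas w (cube c r) ^ (1 / p)
      ≤ (∫⁻ y in S, ENNReal.ofReal (w y) * g y ^ p) ^ (1 / p) * N S ^ ((p - 1) / p) *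
          wMeas w (cube c r) ^ (1 / p) := by
        gcongr
        exact lintegral_le_weighted_holder _ hp hw.1
          hw.2.aestronglyMeasurable.aemeasurable.restrict hg
    _ ≤ (∫⁻ y in S, g y ^ p ∂wMeas w) ^ (1 / p) *
          (wMeas w (cube c r) ^ (1 / p) * N (cube c r) ^ ((p - 1) / p)) := by
        rw [hw.setLIntegral_wMeas, mul_assoc, mul_comm (N S ^ _)]
        gcongr
    _ ≤ _ := by
        rw [mul_comm (ENNReal.ofReal _), mul_assoc]
        gcongr

theorem MemApPhi.exists_lintegral_div_phiVol_le {p : ℝ} (hp : 1 ≤ p) (hw : IsWeight w)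
    (hA : MemApPhi α₀ p w) :
    ∃ C > 0, ∀ (c : En n) (r : ℝ), 0 < r → ∀ S ⊆ cube c r, ∀ g : En n → ℝ≥0∞,
      AEMeasurable g (volume.restrict S) →
      (∫⁻ y in S, g y) / phiVol α₀ c r ≤
        ENNReal.ofReal C * ((∫⁻ y in S, g y ^ p ∂wMeas w) / wMeas w (cube c r)) ^ (1 / p) := by
  suffices ∃ C > 0, ∀ (c : En n) (r : ℝ), 0 < r → ∀ S ⊆ cube c r, ∀ g : En n → ℝ≥0∞,
      AEMeasurable g (volume.restrict S) →
      (∫⁻ y in S, g y) * wMeas w (cube c r) ^ (1 / p) ≤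
        ENNReal.ofReal C * (∫⁻ y in S, g y ^ p ∂wMeas w) ^ (1 / p) * phiVol α₀ c r by
    obtain ⟨C, hC, h⟩ := this
    refine ⟨C, hC, fun c r hr S hS g hg => ENNReal.div_le_mul_div_rpow (by positivity)
      (phiVol_ne_zero α₀ c hr) (phiVol_ne_top α₀ c r)
      (hw.wMeas_ne_zero (volume_cube_ne_zero c hr)) (hw.wMeas_ne_top (isCompact_cube c r))
      (h c r hr S hS g hg)⟩
  rcases hp.eq_or_lt with rfl | hp
  · rw [MemApPhi, if_pos rfl] at hA
    obtain ⟨C, hC, h⟩ := hA.exists_lintegral_mul_wMeas_le hw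
    exact ⟨C, hC, fun c r hr S hS g _ => by simpa using h c r hr S hS g⟩
  · rw [MemApPhi, if_neg hp.ne'] at hA
    exact hA.exists_lintegral_mul_wMeas_rpow_le hp hw

end Weight

end Paper

theorem stmt6_general {n : ℕ} {α₀ : ℝ} (hα₀ : 0 < α₀)
    {p : ℝ} (hp : 1 ≤ p) (w : En n → ℝ) (hw : IsWeight w) (hAp : MemApPhi α₀ p w) :
    ∃ C > 0, ∀ (c : En n) (r : ℝ), 0 < r →
      (∀ f : En n → ℝ, LocallyIntegrable f volume →
        (∫⁻ y in cube c r, ENNReal.ofReal |f y|) /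
            (ENNReal.ofReal (phi α₀ (cubeVol c r)) * volume (cube c r)) ≤
          ENNReal.ofReal C *
            ((∫⁻ y in cube c r, ENNReal.ofReal |f y| ^ p ∂(wMeas w)) /
                wMeas w (cube c (5 * r))) ^ (1 / p)) ∧
      (∀ E : Set (En n), MeasurableSet E → E ⊆ cube c r →
        volume E / (ENNReal.ofReal (phi α₀ (cubeVol c r)) * volume (cube c r)) ≤
          ENNReal.ofReal C * (wMeas w E / wMeas w (cube c (5 * r))) ^ (1 / p)) := by
  obtain ⟨C, hC, hcube⟩ := hAp.exists_lintegral_div_phiVol_le hp hw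
  set K : ℝ := ((5 : ℝ) ^ n) ^ α₀ * 5 ^ n
  refine ⟨K * C, by positivity, fun c r hr => ?_⟩
  have key : ∀ S ⊆ cube c r, ∀ g : En n → ℝ≥0∞, AEMeasurable g (volume.restrict S) →
      (∫⁻ y in S, g y) / phiVol α₀ c r ≤ ENNReal.ofReal (K * C) *
        ((∫⁻ y in S, g y ^ p ∂wMeas w) / wMeas w (cube c (5 * r))) ^ (1 / p) := fun S hS g hg =>
    calc (∫⁻ y in S, g y) / phiVol α₀ c r
        ≤ ENNReal.ofReal K * ((∫⁻ y in S, g y) / phiVol α₀ c (5 * r)) :=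
          div_phiVol_le_mul_div_phiVol hα₀.le c hr (by norm_num) _
      _ ≤ ENNReal.ofReal K * (ENNReal.ofReal C *
            ((∫⁻ y in S, g y ^ p ∂wMeas w) / wMeas w (cube c (5 * r))) ^ (1 / p)) := by
          gcongr
          exact hcube c (5 * r) (by positivity) S
            (hS.trans (cube_subset_cube c (by linarith))) g hg
      _ = _ := by rw [ENNReal.ofReal_mul (show 0 ≤ K by positivity), mul_assoc]
  refine ⟨fun f hf => key _ subset_rfl _ ?_, fun E _ hE => ?_⟩
  · exact (hf.aestronglyMeasurable.aemeasurable.norm.ennreal_ofReal).restrict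
  · simpa [phiVol] using key E hE (fun _ => 1) aemeasurable_const

theorem stmt6 {n : ℕ} (hn : 1 ≤ n) {α₀ : ℝ} (hα₀ : 0 < α₀)
    {p : ℝ} (hp : 1 ≤ p) (w : En n → ℝ) (hw : IsWeight w) (hAp : MemApPhi α₀ p w) :
    ∃ C > 0, ∀ (c : En n) (r : ℝ), 0 < r →
      (∀ f : En n → ℝ, LocallyIntegrable f volume →
        (∫⁻ y in cube c r, ENNReal.ofReal |f y|) /
            (ENNReal.ofReal (phi α₀ (cubeVol c r)) * volume (cube c r)) ≤
          ENNReal.ofReal C *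
            ((∫⁻ y in cube c r, ENNReal.ofReal |f y| ^ p ∂(wMeas w)) /
                wMeas w (cube c (5 * r))) ^ (1 / p)) ∧
      (∀ E : Set (En n), MeasurableSet E → E ⊆ cube c r →
        volume E / (ENNReal.ofReal (phi α₀ (cubeVol c r)) * volume (cube c r)) ≤
          ENNReal.ofReal C * (wMeas w E / wMeas w (cube c (5 * r))) ^ (1 / p)) :=
  stmt6_general hα₀ hp w hw hAp
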